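/- arXiv:1407.0887 — 4 statements merged into one kernel-verified Lean document; each statement's English description precedes it below -/
import Mathlib

section
/- Consider the implicit scheme (θ = 1). Assume hypothesis (fmy) holds with l^Y > 0, hypothesis (fLz) holds with constant L^Z, and Λ (L^Z)² ≤ 2 l^Y. Then for every essentially bounded terminal condition ξ and every 0 ≤ i ≤ n, |Y_i| ≤ ‖ξ‖_∞ almost surely; in particular |Y_0| ≤ ‖ξ‖_∞ almost surely, i.e. the implicit Euler scheme is numerically stable (in fact A-stable, since the condition does not involve h). -/
open MeasureTheory ProbabilityTheory
open scoped RealInnerProductSpace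

/-! Backward induction on `i`, with `M = ‖ξ‖_∞`. Suppose `‖Y_{i+1}‖ ≤ M` and let
`E = E[Y_{i+1} | ℱ_{t_i}]`. Since `Y_i` and `Z_i` are `ℱ_{t_i}`-measurable, the implicit step
reads `Y_i = E + h f(Y_i, Z_i)`. As `E[H_i | ℱ_{t_i}] = 0`, each entry of `Z_i` is a conditional
covariance of `Y_{i+1}` with `H_i`, so the conditional Cauchy–Schwarz inequality gives
`h ‖Z_i‖² ≤ d c_i ∑_k Var(Y_{i+1}^k | ℱ_{t_i}) ≤ Λ (M² - ‖E‖²)`.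
Testing the implicit step against `Y_i` and using (fmy), (fLz) and AM–GM, the condition
`Λ (L^Z)² ≤ 2 l^Y` lets this bound absorb the `Z`-term, leaving
`‖Y_i‖² + (‖Y_i‖ - ‖E‖)² ≤ M²`. -/

theorem sq_le_mul_of_forall_rat_nonneg {A B C : ℝ}
    (h : ∀ q : ℚ, 0 ≤ A - 2 * q * B + q ^ 2 * C) : B ^ 2 ≤ A * C := by
  have hreal (s : ℝ) : 0 ≤ C * (s * s) + (-2 * B) * s + A :=
    (Rat.denseRange_cast (𝕜 := ℝ)).induction_on s (isClosed_le continuous_const (by fun_prop))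
      fun q => by linarith [h q]
  have hdisc := discrim_le_zero hreal
  rw [discrim] at hdisc
  linarith

theorem norm_le_of_eq_add_smul {E G : Type*} [NormedAddCommGroup E] [InnerProductSpace ℝ E]
    [NormedAddCommGroup G] {f : E → G → E} {lY LZ Λ h M : ℝ} (hf0 : f 0 0 = 0)
    (hfmy : ∀ y y' z, ⟪y - y', f y z - f y' z⟫ ≤ -lY * ‖y - y'‖ ^ 2)
    (hfLz : ∀ y z z', ‖f y z - f y z'‖ ≤ LZ * ‖z - z'‖)
    (hlY : 0 < lY) (hΛ : 0 < Λ) (hcond : Λ * LZ ^ 2 ≤ 2 * lY) (hh : 0 ≤ h)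
    {y e : E} {z : G} (hy : y = e + h • f y z) (hz : h * ‖z‖ ^ 2 ≤ Λ * (M ^ 2 - ‖e‖ ^ 2))
    (hM : 0 ≤ M) : ‖y‖ ≤ M := by
  have hinner : ⟪y, f y z⟫ ≤ -lY * ‖y‖ ^ 2 + LZ * ‖y‖ * ‖z‖ := by
    have hmono := hfmy y 0 z
    have hlip : ⟪y, f 0 z⟫ ≤ ‖y‖ * (LZ * ‖z‖) :=
      (real_inner_le_norm _ _).trans <| mul_le_mul_of_nonneg_left
        (by simpa [hf0] using hfLz 0 z 0) (norm_nonneg y)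
    rw [sub_zero, inner_sub_right] at hmono
    linarith
  have hnorm : ‖y‖ ^ 2 ≤ ‖y‖ * ‖e‖ + h * (-lY * ‖y‖ ^ 2 + LZ * ‖y‖ * ‖z‖) := by
    have hsplit : ‖y‖ ^ 2 = ⟪y, e⟫ + h * ⟪y, f y z⟫ := by
      rw [← real_inner_self_eq_norm_sq]
      nth_rewrite 2 [hy]
      rw [inner_add_right, real_inner_smul_right]
    nlinarith [real_inner_le_norm y e]
  have he : ‖e‖ ^ 2 ≤ M ^ 2 := by
    nlinarith [mul_nonneg hh (sq_nonneg ‖z‖)]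
  have hamgm : 4 * lY * (h * (LZ * ‖y‖ * ‖z‖)) ≤
      4 * lY * (h * lY * ‖y‖ ^ 2) + LZ ^ 2 * (h * ‖z‖ ^ 2) := by
    nlinarith [mul_nonneg hh (sq_nonneg (2 * lY * ‖y‖ - LZ * ‖z‖))]
  have hsum : ‖y‖ ^ 2 + (‖y‖ - ‖e‖) ^ 2 ≤ M ^ 2 := by
    nlinarith [mul_le_mul_of_nonneg_left hz (sq_nonneg LZ),
      mul_le_mul_of_nonneg_right hcond (sub_nonneg.2 he)]
  nlinarith [sq_nonneg (‖y‖ - ‖e‖), norm_nonneg y]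

section CondExp

variable {Ω : Type*} {m m₀ : MeasurableSpace Ω} {μ : Measure[m₀] Ω}

theorem condExp_mul_sq_le_mul_condExp_sq {W H : Ω → ℝ} (hW : MemLp W 2 μ) (hH : MemLp H 2 μ) :
    ∀ᵐ ω ∂μ, (μ[W * H | m] ω) ^ 2 ≤ μ[W ^ 2 | m] ω * μ[H ^ 2 | m] ω := by
  have hWH : Integrable (W * H) μ := hW.integrable_mul hH
  have hWW : Integrable (W ^ 2) μ := hW.integrable_sq
  have hHH : Integrable (H ^ 2) μ := hH.integrable_sq
  -- `μ[(W - q H)² | m] ≥ 0`; `q` ranges over `ℚ` so that the null sets can be discarded at once.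
  have hquad : ∀ q : ℚ, ∀ᵐ ω ∂μ,
      0 ≤ μ[W ^ 2 | m] ω - 2 * q * μ[W * H | m] ω + q ^ 2 * μ[H ^ 2 | m] ω := by
    intro q
    have hexp :
        (W - (q : ℝ) • H) ^ 2 = W ^ 2 - (2 * q : ℝ) • (W * H) + ((q : ℝ) ^ 2) • H ^ 2 := by
      ext ω
      simp only [Pi.pow_apply, Pi.sub_apply, Pi.add_apply, Pi.smul_apply, Pi.mul_apply,
        smul_eq_mul]
      ring
    have hnonneg : 0 ≤ᵐ[μ] μ[(W - (q : ℝ) • H) ^ 2 | m] :=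
      condExp_nonneg (.of_forall fun ω => sq_nonneg _)
    rw [hexp] at hnonneg
    filter_upwards [hnonneg,
      condExp_add (hWW.sub (hWH.smul (2 * q : ℝ))) (hHH.smul ((q : ℝ) ^ 2)) m,
      condExp_sub hWW (hWH.smul (2 * q : ℝ)) m, condExp_smul (2 * q : ℝ) (W * H) m,
      condExp_smul ((q : ℝ) ^ 2) (H ^ 2) m] with ω h0 h1 h2 h3 h4
    simp only [h1, h2, h3, h4, Pi.add_apply, Pi.sub_apply, Pi.smul_apply, smul_eq_mul,
      Pi.zero_apply] at h0
    linarith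
  filter_upwards [ae_all_iff.2 hquad] with ω hω
  exact sq_le_mul_of_forall_rat_nonneg hω

theorem condExp_sub_condExp_mul_of_condExp_eq_zero [IsFiniteMeasure μ] {W H : Ω → ℝ}
    (hW : MemLp W 2 μ) (hH : MemLp H 2 μ) (hH0 : μ[H | m] =ᵐ[μ] 0) :
    μ[(W - μ[W | m]) * H | m] =ᵐ[μ] μ[W * H | m] := by
  have hEH : Integrable (μ[W | m] * H) μ := (hW.condExp one_le_two).integrable_mul hH
  rw [sub_mul]
  filter_upwards [condExp_sub (hW.integrable_mul hH) hEH m,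
    condExp_mul_of_stronglyMeasurable_left stronglyMeasurable_condExp hEH
      (hH.integrable one_le_two), hH0] with ω h1 h2 h3
  simp [h1, h2, h3]

theorem condExp_mul_sq_le_condVar_mul [IsFiniteMeasure μ] {W H : Ω → ℝ}
    (hW : MemLp W 2 μ) (hH : MemLp H 2 μ) (hH0 : μ[H | m] =ᵐ[μ] 0) :
    ∀ᵐ ω ∂μ, (μ[W * H | m] ω) ^ 2 ≤ Var[W; μ | m] ω * μ[H ^ 2 | m] ω := by
  filter_upwards [condExp_sub_condExp_mul_of_condExp_eq_zero hW hH hH0,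
    condExp_mul_sq_le_mul_condExp_sq (m := m) (hW.sub (hW.condExp one_le_two)) hH] with ω h1 h2
  rwa [← h1]

theorem EuclideanSpace.aestronglyMeasurable_of_apply {ι : Type*} [Fintype ι]
    {g : Ω → EuclideanSpace ℝ ι} (hg : ∀ i, AEStronglyMeasurable[m] (fun ω => g ω i) μ) :
    AEStronglyMeasurable[m] g μ := by
  choose G hGm hGe using hg
  refine ⟨fun ω => WithLp.toLp 2 fun i => G i ω, ?_, ?_⟩
  · exact ((PiLp.continuous_toLp 2 _).measurable.comp
      (@measurable_pi_lambda _ _ _ m _ _ fun i => (hGm i).measurable)).stronglyMeasurable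
  · filter_upwards [ae_all_iff.2 hGe] with ω hω
    ext i
    exact hω i

theorem condExp_add_of_aestronglyMeasurable_right (hm : m ≤ m₀) [IsFiniteMeasure μ]
    {E : Type*} [NormedAddCommGroup E] [NormedSpace ℝ E] [CompleteSpace E] {X g : Ω → E}
    (hX : Integrable X μ) (hXg : Integrable (X + g) μ) (hg : AEStronglyMeasurable[m] g μ) :
    μ[X + g | m] =ᵐ[μ] μ[X | m] + g := by
  have hgi : Integrable g μ := by simpa using hXg.sub hX
  filter_upwards [condExp_add hX hgi m, condExp_of_aestronglyMeasurable' hm hg hgi] with ω h1 h2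
  simp [h1, h2]

theorem sum_condVar_apply_le (hm : m ≤ m₀) [IsFiniteMeasure μ] {ι : Type*} [Fintype ι]
    {Y : Ω → EuclideanSpace ℝ ι} {M : ℝ} (hY : AEStronglyMeasurable Y μ)
    (hYM : ∀ᵐ ω ∂μ, ‖Y ω‖ ≤ M) :
    ∀ᵐ ω ∂μ, ∑ k, Var[fun ω => Y ω k; μ | m] ω ≤ M ^ 2 - ‖μ[Y | m] ω‖ ^ 2 := by
  have hY2 : MemLp Y 2 μ := (memLp_top_of_bound hY M hYM).mono_exponent le_top
  have hYk (k : ι) : MemLp (fun ω => Y ω k) 2 μ :=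
    (EuclideanSpace.proj (𝕜 := ℝ) k).comp_memLp' hY2
  have hnorm : (∑ k, (fun ω => Y ω k) ^ 2) = fun ω => ‖Y ω‖ ^ 2 := by
    ext ω; simp [EuclideanSpace.real_norm_sq_eq]
  have hsum : μ[fun ω => ‖Y ω‖ ^ 2 | m] =ᵐ[μ] ∑ k, μ[(fun ω => Y ω k) ^ 2 | m] :=
    hnorm ▸ condExp_finsetSum (fun k _ => (hYk k).integrable_sq) m
  have hbound : μ[fun ω => ‖Y ω‖ ^ 2 | m] ≤ᵐ[μ] fun _ => M ^ 2 := by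
    rw [← condExp_const (μ := μ) hm (M ^ 2)]
    refine condExp_mono (hY2.integrable_norm_pow two_ne_zero)
      (integrable_const (M ^ 2)) ?_
    filter_upwards [hYM] with ω hω
    exact pow_le_pow_left₀ (norm_nonneg _) hω 2
  have hvar := ae_all_iff.2 fun k => condVar_ae_eq_condExp_sq_sub_sq_condExp hm (hYk k)
  have hcoord := ae_all_iff.2 fun k =>
    (EuclideanSpace.proj (𝕜 := ℝ) k).comp_condExp_comm (m := m) (hY2.integrable one_le_two)
  filter_upwards [hsum, hbound, hvar, hcoord] with ω hsum hbound hvar hcoord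
  simp only [Finset.sum_apply] at hsum
  have hE : ‖μ[Y | m] ω‖ ^ 2 = ∑ k, (μ[fun ω => Y ω k | m] ω) ^ 2 := by
    rw [EuclideanSpace.real_norm_sq_eq]
    exact Finset.sum_congr rfl fun k _ => congrArg (· ^ 2) (hcoord k)
  simp only [hvar, Pi.sub_apply, Pi.pow_apply, Finset.sum_sub_distrib, hE, ← hsum]
  linarith

theorem mul_norm_sq_le_of_condExp_mul (hm : m ≤ m₀) [IsFiniteMeasure μ] {ι κ : Type*}
    [Fintype ι] [Fintype κ] {Y : Ω → EuclideanSpace ℝ ι} {H : Ω → EuclideanSpace ℝ κ}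
    {Z : Ω → EuclideanSpace ℝ (ι × κ)} {h c Λ M : ℝ} (hh : 0 ≤ h) (hΛ : 0 ≤ Λ)
    (hcΛ : Fintype.card κ * c ≤ Λ) (hY : AEStronglyMeasurable Y μ) (hYM : ∀ᵐ ω ∂μ, ‖Y ω‖ ≤ M)
    (hH : MemLp H 2 μ) (hH0 : μ[H | m] =ᵐ[μ] 0)
    (hHvar : ∀ l, (fun ω => h * μ[fun ω => H ω l * H ω l | m] ω) =ᵐ[μ] fun _ => c)
    (hZ : ∀ k l, (fun ω => Z ω (k, l)) =ᵐ[μ] μ[fun ω => Y ω k * H ω l | m]) :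
    ∀ᵐ ω ∂μ, h * ‖Z ω‖ ^ 2 ≤ Λ * (M ^ 2 - ‖μ[Y | m] ω‖ ^ 2) := by
  have hY2 : MemLp Y 2 μ := (memLp_top_of_bound hY M hYM).mono_exponent le_top
  have hCS (k : ι) (l : κ) : ∀ᵐ ω ∂μ, (μ[fun ω => Y ω k * H ω l | m] ω) ^ 2 ≤
      Var[fun ω => Y ω k; μ | m] ω * μ[fun ω => H ω l * H ω l | m] ω := by
    have hYk : MemLp (fun ω => Y ω k) 2 μ := (EuclideanSpace.proj (𝕜 := ℝ) k).comp_memLp' hY2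
    have hHl : MemLp (fun ω => H ω l) 2 μ := (EuclideanSpace.proj (𝕜 := ℝ) l).comp_memLp' hH
    have hcomm : (fun ω => μ[H | m] ω l) =ᵐ[μ] μ[fun ω => H ω l | m] :=
      (EuclideanSpace.proj (𝕜 := ℝ) l).comp_condExp_comm (hH.integrable one_le_two)
    have hHl0 : μ[fun ω => H ω l | m] =ᵐ[μ] 0 := by
      filter_upwards [hcomm, hH0] with ω h1 h2
      rw [← h1, h2]
      rfl
    have hsq : (fun ω => H ω l) ^ 2 = fun ω => H ω l * H ω l := funext fun ω => sq (H ω l)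
    rw [← hsq]
    exact condExp_mul_sq_le_condVar_mul hYk hHl hHl0
  have hvar_nonneg (k : ι) : 0 ≤ᵐ[μ] Var[fun ω => Y ω k; μ | m] :=
    condExp_nonneg (.of_forall fun ω => sq_nonneg _)
  filter_upwards [ae_all_iff.2 fun k => ae_all_iff.2 (hCS k), ae_all_iff.2 hHvar,
    ae_all_iff.2 fun k => ae_all_iff.2 (hZ k), ae_all_iff.2 hvar_nonneg,
    sum_condVar_apply_le hm hY hYM] with ω hCS hHvar hZ hvar_nonneg hsum
  have hZkl (k : ι) (l : κ) : h * Z ω (k, l) ^ 2 ≤ c * Var[fun ω => Y ω k; μ | m] ω := by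
    rw [hZ k l, ← hHvar l]
    nlinarith [mul_le_mul_of_nonneg_left (hCS k l) hh]
  calc h * ‖Z ω‖ ^ 2 = ∑ k, ∑ l, h * Z ω (k, l) ^ 2 := by
        rw [EuclideanSpace.real_norm_sq_eq, Finset.mul_sum, Fintype.sum_prod_type]
    _ ≤ ∑ k, ∑ _l : κ, c * Var[fun ω => Y ω k; μ | m] ω :=
        Finset.sum_le_sum fun k _ => Finset.sum_le_sum fun l _ => hZkl k l
    _ = Fintype.card κ * c * ∑ k, Var[fun ω => Y ω k; μ | m] ω := by
        simp [Finset.mul_sum, mul_assoc]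
    _ ≤ Λ * ∑ k, Var[fun ω => Y ω k; μ | m] ω := by
        gcongr
        exact Finset.sum_nonneg fun k _ => hvar_nonneg k
    _ ≤ Λ * (M ^ 2 - ‖μ[Y | m] ω‖ ^ 2) := by gcongr

theorem norm_le_of_implicit_step (hm : m ≤ m₀) [IsFiniteMeasure μ] {ι κ : Type*} [Fintype ι]
    [Fintype κ] {f : EuclideanSpace ℝ ι → EuclideanSpace ℝ (ι × κ) → EuclideanSpace ℝ ι}
    (hf_cont : Continuous fun p : EuclideanSpace ℝ ι × EuclideanSpace ℝ (ι × κ) => f p.1 p.2)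
    (hf0 : f 0 0 = 0) {lY LZ Λ h c M : ℝ}
    (hfmy : ∀ y y' z, ⟪y - y', f y z - f y' z⟫ ≤ -lY * ‖y - y'‖ ^ 2)
    (hfLz : ∀ y z z', ‖f y z - f y z'‖ ≤ LZ * ‖z - z'‖)
    (hlY : 0 < lY) (hΛ : 0 < Λ) (hcond : Λ * LZ ^ 2 ≤ 2 * lY) (hh : 0 ≤ h)
    (hcΛ : Fintype.card κ * c ≤ Λ) (hM : 0 ≤ M)
    {Y' Y : Ω → EuclideanSpace ℝ ι} {H : Ω → EuclideanSpace ℝ κ}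
    {Z : Ω → EuclideanSpace ℝ (ι × κ)} (hY' : AEStronglyMeasurable Y' μ)
    (hY'M : ∀ᵐ ω ∂μ, ‖Y' ω‖ ≤ M) (hH : MemLp H 2 μ) (hH0 : μ[H | m] =ᵐ[μ] 0)
    (hHvar : ∀ l, (fun ω => h * μ[fun ω => H ω l * H ω l | m] ω) =ᵐ[μ] fun _ => c)
    (hZ : ∀ k l, (fun ω => Z ω (k, l)) =ᵐ[μ] μ[fun ω => Y' ω k * H ω l | m])
    (hY : Y =ᵐ[μ] μ[fun ω => Y' ω + h • f (Y ω) (Z ω) | m]) :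
    ∀ᵐ ω ∂μ, ‖Y ω‖ ≤ M := by
  by_cases hint : Integrable (fun ω => Y' ω + h • f (Y ω) (Z ω)) μ
  swap
  · -- the conditional expectation of a non-integrable function is `0`
    filter_upwards [hY] with ω hω
    simp [hω, condExp_of_not_integrable hint, hM]
  have hYm : AEStronglyMeasurable[m] Y μ :=
    stronglyMeasurable_condExp.aestronglyMeasurable.congr hY.symm
  have hZm : AEStronglyMeasurable[m] Z μ :=
    EuclideanSpace.aestronglyMeasurable_of_apply fun ⟨k, l⟩ =>
      stronglyMeasurable_condExp.aestronglyMeasurable.congr (hZ k l).symm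
  have hfixed : ∀ᵐ ω ∂μ, Y ω = μ[Y' | m] ω + h • f (Y ω) (Z ω) :=
    hY.trans <| condExp_add_of_aestronglyMeasurable_right hm
      ((memLp_top_of_bound hY' M hY'M).integrable le_top) hint
      ((hf_cont.comp_aestronglyMeasurable₂ hYm hZm).const_smul h)
  filter_upwards [hfixed,
    mul_norm_sq_le_of_condExp_mul hm hh hΛ.le hcΛ hY' hY'M hH hH0 hHvar hZ] with ω h1 h2
  exact norm_le_of_eq_add_smul hf0 hfmy hfLz hlY hΛ hcond hh h1 h2 hM

end CondExp

theorem implicit_euler_numerically_stable_general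
    {Ω : Type*} [MeasurableSpace Ω] (μ : Measure Ω) [IsProbabilityMeasure μ]
    (n m d : ℕ)
    -- the time grid
    (t : Fin (n + 1) → ℝ) (ht : StrictMono t)
    -- the discrete filtration
    (F : Fin (n + 1) → MeasurableSpace Ω)
    (hF_le : ∀ i, F i ≤ ‹MeasurableSpace Ω›)
    -- the H-coefficients
    (lam Lam : ℝ) (hLam : 0 < Lam)
    (c : Fin n → ℝ) (hc : ∀ i, lam / (d : ℝ) ≤ c i ∧ c i ≤ Lam / (d : ℝ))
    (H : Fin n → Ω → EuclideanSpace ℝ (Fin d))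
    (hH_L2 : ∀ i, MemLp (H i) 2 μ)
    (hH_mean : ∀ i, μ[H i|F i.castSucc] =ᵐ[μ] 0)
    (hH_cov : ∀ (i : Fin n) (k l : Fin d),
      (fun ω => (t i.succ - t i.castSucc) * (μ[fun ω' => H i ω' k * H i ω' l|F i.castSucc]) ω)
        =ᵐ[μ] fun _ => if k = l then c i else 0)
    -- the driver
    (f : EuclideanSpace ℝ (Fin m) → EuclideanSpace ℝ (Fin m × Fin d) → EuclideanSpace ℝ (Fin m))
    (hf_cont : Continuous fun p : EuclideanSpace ℝ (Fin m) × EuclideanSpace ℝ (Fin m × Fin d) =>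
      f p.1 p.2)
    (hf0 : f 0 0 = 0)
    (lY LZ : ℝ) (hlY : 0 < lY)
    -- (fmy): monotonicity in y
    (hfmy : ∀ (y y' : EuclideanSpace ℝ (Fin m)) (z : EuclideanSpace ℝ (Fin m × Fin d)),
      ⟪y - y', f y z - f y' z⟫ ≤ -lY * ‖y - y'‖ ^ 2)
    -- (fLz): Lipschitz continuity in z
    (hfLz : ∀ (y : EuclideanSpace ℝ (Fin m)) (z z' : EuclideanSpace ℝ (Fin m × Fin d)),
      ‖f y z - f y z'‖ ≤ LZ * ‖z - z'‖)
    -- the stability condition Λ (L^Z)² ≤ 2 l^Y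
    (hcond : Lam * LZ ^ 2 ≤ 2 * lY)
    -- the terminal condition
    (ξ : Ω → EuclideanSpace ℝ (Fin m))
    (hξ_bdd : MemLp ξ ⊤ μ)
    -- the scheme
    (Y : Fin (n + 1) → Ω → EuclideanSpace ℝ (Fin m))
    (Z : Fin n → Ω → EuclideanSpace ℝ (Fin m × Fin d))
    (hY_L2 : ∀ i, MemLp (Y i) 2 μ)
    (hY_final : Y (Fin.last n) =ᵐ[μ] ξ)
    (hZ_def : ∀ (i : Fin n) (k : Fin m) (l : Fin d),
      (fun ω => Z i ω (k, l)) =ᵐ[μ] μ[fun ω => Y i.succ ω k * H i ω l|F i.castSucc])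
    (hY_def : ∀ i : Fin n, Y i.castSucc =ᵐ[μ]
      μ[fun ω => Y i.succ ω + (t i.succ - t i.castSucc) • f (Y i.castSucc ω) (Z i ω)|
        F i.castSucc]) :
    ∀ i : Fin (n + 1), ∀ᵐ ω ∂μ, ‖Y i ω‖ ≤ (eLpNorm ξ ⊤ μ).toReal := by
  set M := (eLpNorm ξ ⊤ μ).toReal with hM_def
  have hM : 0 ≤ M := ENNReal.toReal_nonneg
  have hξM : ∀ᵐ ω ∂μ, ‖ξ ω‖ ≤ M := by
    rw [hM_def, toReal_eLpNorm hξ_bdd.1]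
    exact ae_le_lpNorm_exponent_top hξ_bdd
  intro i
  induction i using Fin.reverseInduction with
  | last =>
    filter_upwards [hY_final, hξM] with ω h1 h2
    rwa [h1]
  | cast i IH =>
    have hdc : (Fintype.card (Fin d) : ℝ) * c i ≤ Lam := by
      rw [Fintype.card_fin, mul_comm]
      exact mul_le_of_le_div₀ hLam.le (Nat.cast_nonneg d) (hc i).2
    exact norm_le_of_implicit_step (hF_le _) hf_cont hf0 hfmy hfLz hlY hLam hcond
      (sub_nonneg.2 (ht i.castSucc_lt_succ).le) hdc hM (hY_L2 _).1 IH (hH_L2 i) (hH_mean i)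
      (fun l => by simpa using hH_cov i l l) (hZ_def i) (hY_def i)

/-- Numerical stability of the implicit Euler scheme (θ = 1) for BSDEs in the
multidimensional case: under monotonicity in `y` (constant `lY > 0`), Lipschitz
continuity in `z` (constant `LZ`), and the condition `Λ (L^Z)² ≤ 2 l^Y`, the scheme
started from an essentially bounded terminal condition `ξ` satisfies
`|Y_i| ≤ ‖ξ‖_∞` a.s. for every `i`; in particular it is A-stable. -/
theorem implicit_euler_numerically_stable
    {Ω : Type*} [MeasurableSpace Ω] (μ : Measure Ω) [IsProbabilityMeasure μ]
    (n m d : ℕ) (hn : 1 ≤ n) (hm : 1 ≤ m) (hd : 1 ≤ d)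
    -- the time grid
    (t : Fin (n + 1) → ℝ) (ht0 : t 0 = 0) (ht : StrictMono t)
    -- the discrete filtration
    (F : Fin (n + 1) → MeasurableSpace Ω)
    (hF_mono : Monotone F) (hF_le : ∀ i, F i ≤ ‹MeasurableSpace Ω›)
    -- the H-coefficients
    (lam Lam : ℝ) (hlam : 0 < lam) (hLam : 0 < Lam)
    (c : Fin n → ℝ) (hc : ∀ i, lam / (d : ℝ) ≤ c i ∧ c i ≤ Lam / (d : ℝ))
    (H : Fin n → Ω → EuclideanSpace ℝ (Fin d))
    (hH_meas : ∀ i, Measurable[F i.succ] (H i))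
    (hH_L2 : ∀ i, MemLp (H i) 2 μ)
    (hH_mean : ∀ i, μ[H i|F i.castSucc] =ᵐ[μ] 0)
    (hH_cov : ∀ (i : Fin n) (k l : Fin d),
      (fun ω => (t i.succ - t i.castSucc) * (μ[fun ω' => H i ω' k * H i ω' l|F i.castSucc]) ω)
        =ᵐ[μ] fun _ => if k = l then c i else 0)
    -- the driver
    (f : EuclideanSpace ℝ (Fin m) → EuclideanSpace ℝ (Fin m × Fin d) → EuclideanSpace ℝ (Fin m))
    (hf_cont : Continuous fun p : EuclideanSpace ℝ (Fin m) × EuclideanSpace ℝ (Fin m × Fin d) =>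
      f p.1 p.2)
    (hf0 : f 0 0 = 0)
    (lY LZ : ℝ) (hlY : 0 < lY) (hLZ : 0 ≤ LZ)
    -- (fmy): monotonicity in y
    (hfmy : ∀ (y y' : EuclideanSpace ℝ (Fin m)) (z : EuclideanSpace ℝ (Fin m × Fin d)),
      ⟪y - y', f y z - f y' z⟫ ≤ -lY * ‖y - y'‖ ^ 2)
    -- (fLz): Lipschitz continuity in z
    (hfLz : ∀ (y : EuclideanSpace ℝ (Fin m)) (z z' : EuclideanSpace ℝ (Fin m × Fin d)),
      ‖f y z - f y z'‖ ≤ LZ * ‖z - z'‖)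
    -- the stability condition Λ (L^Z)² ≤ 2 l^Y
    (hcond : Lam * LZ ^ 2 ≤ 2 * lY)
    -- the terminal condition
    (ξ : Ω → EuclideanSpace ℝ (Fin m))
    (hξ_meas : Measurable[F (Fin.last n)] ξ) (hξ_bdd : MemLp ξ ⊤ μ)
    -- the scheme
    (Y : Fin (n + 1) → Ω → EuclideanSpace ℝ (Fin m))
    (Z : Fin n → Ω → EuclideanSpace ℝ (Fin m × Fin d))
    (hY_L2 : ∀ i, MemLp (Y i) 2 μ) (hZ_L2 : ∀ i, MemLp (Z i) 2 μ)
    (hY_final : Y (Fin.last n) =ᵐ[μ] ξ)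
    (hZ_def : ∀ (i : Fin n) (k : Fin m) (l : Fin d),
      (fun ω => Z i ω (k, l)) =ᵐ[μ] μ[fun ω => Y i.succ ω k * H i ω l|F i.castSucc])
    (hY_def : ∀ i : Fin n, Y i.castSucc =ᵐ[μ]
      μ[fun ω => Y i.succ ω + (t i.succ - t i.castSucc) • f (Y i.castSucc ω) (Z i ω)|
        F i.castSucc]) :
    ∀ i : Fin (n + 1), ∀ᵐ ω ∂μ, ‖Y i ω‖ ≤ (eLpNorm ξ ⊤ μ).toReal :=
  implicit_euler_numerically_stable_general μ n m d t ht F hF_le lam Lam hLam c hc H hH_L2 hH_mean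
    hH_cov f hf_cont hf0 lY LZ hlY hfmy hfLz hcond ξ hξ_bdd Y Z hY_L2 hY_final hZ_def hY_def
end

section
/- Let d ≥ 1, b ∈ ℝ^d with b ≠ 0, h > 0 and K ≥ 0, and set u := |b|_∞² h. Consider φ_K(x) := e^{−Σ_{ℓ=1}^d x_ℓ} · ( K + h (Σ_{ℓ=1}^d b_ℓ √x_ℓ)² ) for x ∈ [0,∞)^d. Then: (i) if u ≤ K, sup_{x ∈ [0,∞)^d} φ_K(x) = K; (ii) if u ≥ K (and hence in particular if u > K), sup_{x ∈ [0,∞)^d} φ_K(x) = u · e^{K/u − 1}. -/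
/-- For `b ∈ ℝ^d`, `|b|_∞ := max(|b⁺|, |b⁻|)` where `b⁺ = (b₁ ∨ 0, …, b_d ∨ 0)`,
`b⁻ = (b₁ ∧ 0, …, b_d ∧ 0)` and `|·|` is the Euclidean norm. -/
noncomputable def bInfty {d : ℕ} (b : Fin d → ℝ) : ℝ :=
  max (Real.sqrt (∑ ℓ, max (b ℓ) 0 ^ 2)) (Real.sqrt (∑ ℓ, min (b ℓ) 0 ^ 2))

/-!
By Cauchy–Schwarz applied separately to `b⁺` and `b⁻`, `(∑ bℓ √xℓ)² ≤ |b|_∞² ∑ xℓ`, with equality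
along a suitable ray of the orthant, so the supremum of `φ_K` is that of the one-variable function
`s ↦ e^{-s} (K + u s)` on `[0, ∞)`. The latter is bounded by `e^t ≥ 1 + t`: when `u ≤ K` it is
at most `K` and attains it at `s = 0`; when `K ≤ u` it attains `u e^{K/u - 1}` at `s = 1 - K/u`.
-/

open Real Finset Set

section bInfty

variable {d : ℕ} (b : Fin d → ℝ)

lemma bInfty_sq : bInfty b ^ 2 = max (∑ ℓ, max (b ℓ) 0 ^ 2) (∑ ℓ, min (b ℓ) 0 ^ 2) := by
  rw [bInfty, ← Real.sqrt_monotone.map_max,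
    sq_sqrt (le_max_of_le_left (sum_nonneg fun ℓ _ => sq_nonneg _))]

lemma bInfty_sq_pos (hb : b ≠ 0) : 0 < bInfty b ^ 2 := by
  obtain ⟨ℓ, hℓ⟩ : ∃ ℓ, b ℓ ≠ 0 := Function.ne_iff.mp hb
  rw [bInfty_sq]
  rcases lt_or_gt_of_ne hℓ with hneg | hpos
  · exact lt_max_of_lt_right <| sum_pos' (fun j _ => sq_nonneg _)
      ⟨ℓ, mem_univ ℓ, by rw [min_eq_left hneg.le]; positivity⟩
  · exact lt_max_of_lt_left <| sum_pos' (fun j _ => sq_nonneg _)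
      ⟨ℓ, mem_univ ℓ, by rw [max_eq_left hpos.le]; positivity⟩

lemma sq_sum_mul_le_bInfty_sq_mul {y : Fin d → ℝ} (hy : ∀ ℓ, 0 ≤ y ℓ) :
    (∑ ℓ, b ℓ * y ℓ) ^ 2 ≤ bInfty b ^ 2 * ∑ ℓ, y ℓ ^ 2 := by
  have hlo : ∑ ℓ, min (b ℓ) 0 * y ℓ ≤ ∑ ℓ, b ℓ * y ℓ :=
    sum_le_sum fun ℓ _ => mul_le_mul_of_nonneg_right (min_le_left _ _) (hy ℓ)
  have hhi : ∑ ℓ, b ℓ * y ℓ ≤ ∑ ℓ, max (b ℓ) 0 * y ℓ :=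
    sum_le_sum fun ℓ _ => mul_le_mul_of_nonneg_right (le_max_left _ _) (hy ℓ)
  rw [bInfty_sq, max_mul_of_nonneg _ _ (sum_nonneg fun ℓ _ => sq_nonneg (y ℓ))]
  rcases le_total 0 (∑ ℓ, b ℓ * y ℓ) with hpos | hneg
  · calc (∑ ℓ, b ℓ * y ℓ) ^ 2 ≤ (∑ ℓ, max (b ℓ) 0 * y ℓ) ^ 2 := pow_le_pow_left₀ hpos hhi 2
      _ ≤ (∑ ℓ, max (b ℓ) 0 ^ 2) * ∑ ℓ, y ℓ ^ 2 := sum_mul_sq_le_sq_mul_sq _ _ _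
      _ ≤ _ := le_max_left _ _
  · calc (∑ ℓ, b ℓ * y ℓ) ^ 2 ≤ (∑ ℓ, min (b ℓ) 0 * y ℓ) ^ 2 := by nlinarith
      _ ≤ (∑ ℓ, min (b ℓ) 0 ^ 2) * ∑ ℓ, y ℓ ^ 2 := sum_mul_sq_le_sq_mul_sq _ _ _
      _ ≤ _ := le_max_right _ _

lemma exists_nonneg_sum_sq_eq_bInfty_sq_and_sq_sum_mul_eq :
    ∃ c : Fin d → ℝ, (∀ ℓ, 0 ≤ c ℓ) ∧ ∑ ℓ, c ℓ ^ 2 = bInfty b ^ 2 ∧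
      (∑ ℓ, b ℓ * c ℓ) ^ 2 = (bInfty b ^ 2) ^ 2 := by
  rw [bInfty_sq]
  rcases le_total (∑ ℓ, min (b ℓ) 0 ^ 2) (∑ ℓ, max (b ℓ) 0 ^ 2) with hNP | hPN
  · refine ⟨fun ℓ => max (b ℓ) 0, fun ℓ => le_max_right _ _, (max_eq_left hNP).symm, ?_⟩
    have hdot : ∑ ℓ, b ℓ * max (b ℓ) 0 = ∑ ℓ, max (b ℓ) 0 ^ 2 :=
      sum_congr rfl fun ℓ _ => by rcases le_total 0 (b ℓ) with h | h <;> simp [h, sq]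
    rw [hdot, max_eq_left hNP]
  · refine ⟨fun ℓ => -min (b ℓ) 0, fun ℓ => neg_nonneg.mpr (min_le_right _ _), ?_, ?_⟩
    · simp only [neg_sq, max_eq_right hPN]
    · have hdot : ∑ ℓ, b ℓ * -min (b ℓ) 0 = -∑ ℓ, min (b ℓ) 0 ^ 2 := by
        rw [← sum_neg_distrib]
        exact sum_congr rfl fun ℓ _ => by rcases le_total 0 (b ℓ) with h | h <;> simp [h, sq]
      rw [hdot, neg_sq, max_eq_right hPN]

lemma exists_sum_eq_and_sq_sum_mul_sqrt_eq (hb : b ≠ 0) {s : ℝ} (hs : 0 ≤ s) :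
    ∃ x : Fin d → ℝ, (∀ ℓ, 0 ≤ x ℓ) ∧ ∑ ℓ, x ℓ = s ∧
      (∑ ℓ, b ℓ * √(x ℓ)) ^ 2 = bInfty b ^ 2 * s := by
  obtain ⟨c, hc, hc_sq, hbc⟩ := exists_nonneg_sum_sq_eq_bInfty_sq_and_sq_sum_mul_eq b
  have hB := bInfty_sq_pos b hb
  set t := s / bInfty b ^ 2
  have ht : 0 ≤ t := by positivity
  refine ⟨fun ℓ => t * c ℓ ^ 2, fun ℓ => by positivity, ?_, ?_⟩
  · rw [← mul_sum, hc_sq, div_mul_cancel₀ _ hB.ne']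
  · have hsqrt : ∀ ℓ, √(t * c ℓ ^ 2) = √t * c ℓ := fun ℓ => by
      rw [sqrt_mul ht, sqrt_sq (hc ℓ)]
    simp only [hsqrt, mul_left_comm _ √t, ← mul_sum, mul_pow, sq_sqrt ht, hbc, t]
    field_simp

lemma isGreatest_image_orthant_of_isGreatest (hb : b ≠ 0) {h : ℝ} (hh : 0 ≤ h) {K M : ℝ}
    (hM : IsGreatest ((fun s => exp (-s) * (K + bInfty b ^ 2 * h * s)) '' Ici 0) M) :
    IsGreatest ((fun x : Fin d → ℝ =>
        exp (-∑ ℓ, x ℓ) * (K + h * (∑ ℓ, b ℓ * √(x ℓ)) ^ 2)) '' {x | ∀ ℓ, 0 ≤ x ℓ}) M := by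
  obtain ⟨⟨s, hs, rfl⟩, hM_ub⟩ := hM
  refine ⟨?_, ?_⟩
  · obtain ⟨x, hx, hx_sum, hx_sq⟩ := exists_sum_eq_and_sq_sum_mul_sqrt_eq b hb hs
    exact ⟨x, hx, by simp only [hx_sum, hx_sq]; ring⟩
  · rintro _ ⟨x, hx, rfl⟩
    have hcs : (∑ ℓ, b ℓ * √(x ℓ)) ^ 2 ≤ bInfty b ^ 2 * ∑ ℓ, x ℓ := by
      simpa only [sq_sqrt (hx _)] using sq_sum_mul_le_bInfty_sq_mul b fun ℓ => sqrt_nonneg (x ℓ)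
    calc exp (-∑ ℓ, x ℓ) * (K + h * (∑ ℓ, b ℓ * √(x ℓ)) ^ 2)
        ≤ exp (-∑ ℓ, x ℓ) * (K + bInfty b ^ 2 * h * ∑ ℓ, x ℓ) := by
          gcongr ?_ * (K + ?_)
          linarith [mul_le_mul_of_nonneg_left hcs hh]
      _ ≤ _ := hM_ub ⟨∑ ℓ, x ℓ, sum_nonneg fun ℓ _ => hx ℓ, rfl⟩

end bInfty

lemma isGreatest_exp_neg_mul_add_of_le {K u : ℝ} (hK : 0 ≤ K) (huK : u ≤ K) :
    IsGreatest ((fun s => exp (-s) * (K + u * s)) '' Ici 0) K := by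
  refine ⟨⟨0, mem_Ici.mpr le_rfl, by simp⟩, ?_⟩
  rintro _ ⟨s, hs, rfl⟩
  calc exp (-s) * (K + u * s) ≤ exp (-s) * (K * (s + 1)) := by
        gcongr exp (-s) * ?_; nlinarith [mem_Ici.mp hs]
    _ ≤ exp (-s) * (K * exp s) := by gcongr; exact add_one_le_exp s
    _ = K := by rw [exp_neg]; field_simp

lemma isGreatest_exp_neg_mul_add_of_ge {K u : ℝ} (hu : 0 < u) (hKu : K ≤ u) :
    IsGreatest ((fun s => exp (-s) * (K + u * s)) '' Ici 0) (u * exp (K / u - 1)) := by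
  refine ⟨⟨1 - K / u, sub_nonneg.mpr ((div_le_one hu).mpr hKu), ?_⟩, ?_⟩
  · simp only [mul_sub, mul_div_cancel₀ K hu.ne', neg_sub]
    ring
  · rintro _ ⟨s, -, rfl⟩
    calc exp (-s) * (K + u * s) = exp (-s) * (u * (K / u - 1 + s + 1)) := by field_simp; ring
      _ ≤ exp (-s) * (u * exp (K / u - 1 + s)) := by gcongr; exact add_one_le_exp _
      _ = u * exp (K / u - 1) := by rw [exp_add, exp_neg]; field_simp

theorem sup_phi_von_neumann_general (d : ℕ) (b : Fin d → ℝ) (hb : b ≠ 0)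
    (h : ℝ) (hh : 0 < h) (K : ℝ) (hK : 0 ≤ K) :
    (bInfty b ^ 2 * h ≤ K →
      sSup ((fun x : Fin d → ℝ =>
          Real.exp (-∑ ℓ, x ℓ) * (K + h * (∑ ℓ, b ℓ * Real.sqrt (x ℓ)) ^ 2)) ''
        {x | ∀ ℓ, 0 ≤ x ℓ}) = K) ∧
    (K ≤ bInfty b ^ 2 * h →
      sSup ((fun x : Fin d → ℝ =>
          Real.exp (-∑ ℓ, x ℓ) * (K + h * (∑ ℓ, b ℓ * Real.sqrt (x ℓ)) ^ 2)) ''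
        {x | ∀ ℓ, 0 ≤ x ℓ}) =
      bInfty b ^ 2 * h * Real.exp (K / (bInfty b ^ 2 * h) - 1)) := by
  have hu : 0 < bInfty b ^ 2 * h := mul_pos (bInfty_sq_pos b hb) hh
  exact ⟨fun huK => (isGreatest_image_orthant_of_isGreatest b hb hh.le
      (isGreatest_exp_neg_mul_add_of_le hK huK)).csSup_eq,
    fun hKu => (isGreatest_image_orthant_of_isGreatest b hb hh.le
      (isGreatest_exp_neg_mul_add_of_ge hu hKu)).csSup_eq⟩

/-- The key optimization of the Von Neumann stability analysis: with
`φ_K(x) = e^{-Σ x_ℓ} (K + h (Σ b_ℓ √x_ℓ)²)` on the nonnegative orthant and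
`u := |b|_∞² h`, the supremum of `φ_K` equals `K` when `u ≤ K` and equals
`u e^{K/u - 1}` when `u ≥ K`. -/
theorem sup_phi_von_neumann (d : ℕ) (hd : 1 ≤ d) (b : Fin d → ℝ) (hb : b ≠ 0)
    (h : ℝ) (hh : 0 < h) (K : ℝ) (hK : 0 ≤ K) :
    (bInfty b ^ 2 * h ≤ K →
      sSup ((fun x : Fin d → ℝ =>
          Real.exp (-∑ ℓ, x ℓ) * (K + h * (∑ ℓ, b ℓ * Real.sqrt (x ℓ)) ^ 2)) ''
        {x | ∀ ℓ, 0 ≤ x ℓ}) = K) ∧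
    (K ≤ bInfty b ^ 2 * h →
      sSup ((fun x : Fin d → ℝ =>
          Real.exp (-∑ ℓ, x ℓ) * (K + h * (∑ ℓ, b ℓ * Real.sqrt (x ℓ)) ^ 2)) ''
        {x | ∀ ℓ, 0 ≤ x ℓ}) =
      bInfty b ^ 2 * h * Real.exp (K / (bInfty b ^ 2 * h) - 1)) :=
  sup_phi_von_neumann_general d b hb h hh K hK
end

section
/- For p > 0 and u > 0 define the stability predicate S(p,u) := [ u ≤ (1 − p u)² and (1 − p u)² ≤ 1 ] or [ u > (1 − p u)² and u · e^{(1 − p u)²/u − 1} ≤ 1 ]. If 0 < p < 2, then there exists ū ∈ [1, 2/p) such that: (i) for every u > 0, S(p,u) holds if and only if u ≤ ū; (ii) ū satisfies ū · e^{(1 − p ū)²/ū − 1} = 1, and it is the unique solution of this equation in the interval where u > (1 − p u)². Consequently, for the pseudo-explicit Euler scheme with linear driver f(y,z) = a y + Σ b_ℓ z^ℓ, a ≤ 0, b ≠ 0 and −a/|b|_∞² < 2, there exists h̄ ∈ [1/|b|_∞², −2/a) (with −2/a := +∞ if a = 0) such that the scheme is Von Neumann stable if and only if h ≤ h̄. 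-/
/-- The Von Neumann stability predicate of the pseudo-explicit Euler scheme in the
variables `p = -a/|b|_∞²`, `u = |b|_∞² h` (note `(1 + a h)² = (1 - p u)²`). -/
noncomputable def SpredVN (p u : ℝ) : Prop :=
  (u ≤ (1 - p * u) ^ 2 ∧ (1 - p * u) ^ 2 ≤ 1) ∨
    ((1 - p * u) ^ 2 < u ∧ u * Real.exp ((1 - p * u) ^ 2 / u - 1) ≤ 1)

/-! With `g(u) = log u + 1/u + p²u - 2p - 1` one has `u e^{(1-pu)²/u - 1} = e^{g(u)}`, and
`g' = (u-1)/u² + p²`, so `g` is strictly increasing on `[1, ∞)`, with `g 1 < 0 < g (2/p)`: its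
zero there is `ū`. For `u ≤ 1` the predicate `S` always holds (where `(1-pu)² < u`, because
`g(u) < 0`), and for `u > 1` only its second alternative can hold, so `S(p,u) ↔ g(u) ≤ 0 ↔ u ≤ ū`.

For the scheme, Cauchy–Schwarz against `b⁺` and `b⁻` shows that the supremum of
`(∑ b_ℓ √x_ℓ)²` over `x ≥ 0` with `∑ x_ℓ = s` is `|b|_∞² s`, so stability says that
`c + u s ≤ eˢ` for all `s ≥ 0`, with `c = (1 + a h)²` and `u = |b|_∞² h`. An affine function
stays below `exp` on `[0, ∞)` iff it does so at `s = 0` and, when `c < u`, at `s = 1 - c/u`,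
where it takes the value `u`; these two tests are exactly `S(p, u)`. -/

open Real Set Finset

noncomputable def logGrowth (p u : ℝ) : ℝ := log u + 1 / u + p ^ 2 * u - 2 * p - 1

section Threshold

variable {p u : ℝ}

lemma logGrowth_eq (hu : u ≠ 0) : logGrowth p u = log u + ((1 - p * u) ^ 2 / u - 1) := by
  rw [logGrowth]
  field_simp
  ring

lemma mul_exp_eq_exp_logGrowth (hu : 0 < u) :
    u * exp ((1 - p * u) ^ 2 / u - 1) = exp (logGrowth p u) := by
  rw [logGrowth_eq hu.ne', exp_add, exp_log hu]

lemma hasDerivAt_logGrowth (hu : u ≠ 0) :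
    HasDerivAt (logGrowth p) (u⁻¹ - (u ^ 2)⁻¹ + p ^ 2) u := by
  have h : HasDerivAt (fun v => log v + v⁻¹ + p ^ 2 * v - 2 * p - 1)
      (u⁻¹ + -(u ^ 2)⁻¹ + p ^ 2 * 1) u :=
    ((((hasDerivAt_log hu).add (hasDerivAt_inv hu)).add
      ((hasDerivAt_id u).const_mul (p ^ 2))).sub_const (2 * p)).sub_const 1
  unfold logGrowth
  simpa only [one_div, mul_one, ← sub_eq_add_neg] using h

lemma strictMonoOn_logGrowth (p : ℝ) : StrictMonoOn (logGrowth p) (Ici 1) := by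
  refine strictMonoOn_of_deriv_pos (convex_Ici 1) (fun u hu =>
    (hasDerivAt_logGrowth (zero_lt_one.trans_le hu).ne').continuousAt.continuousWithinAt)
    (fun u hu => ?_)
  rw [interior_Ici] at hu
  have hu1 : 1 < u := hu
  rw [(hasDerivAt_logGrowth (p := p) (by linarith : u ≠ 0)).deriv]
  have : (u ^ 2)⁻¹ < u⁻¹ := inv_strictAnti₀ (by linarith) (by nlinarith)
  nlinarith [sq_nonneg p]

lemma logGrowth_neg_of_le_one (hu : 0 < u) (hu1 : u ≤ 1) (hlt : (1 - p * u) ^ 2 < u) :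
    logGrowth p u < 0 := by
  rw [logGrowth_eq hu.ne']
  have := (div_lt_one hu).2 hlt
  linarith [log_nonpos hu.le hu1]

lemma spredVN_iff_le_of_logGrowth_eq_zero {ub : ℝ} (hp : 0 ≤ p) (hub : 1 ≤ ub)
    (hpub : p * ub ≤ 2) (hg : logGrowth p ub = 0) (hu : 0 < u) : SpredVN p u ↔ u ≤ ub := by
  rw [SpredVN, mul_exp_eq_exp_logGrowth hu, exp_le_one_iff]
  have hmono := strictMonoOn_logGrowth p
  constructor
  · rintro (⟨h1, h2⟩ | ⟨-, hneg⟩)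
    · linarith
    · by_contra! hlt
      linarith [hmono (mem_Ici.2 hub) (mem_Ici.2 (hub.trans hlt.le)) hlt]
  · intro hle
    rcases lt_or_ge ((1 - p * u) ^ 2) u with hlt | hge
    · refine Or.inr ⟨hlt, ?_⟩
      rcases le_or_gt u 1 with h1 | h1
      · exact (logGrowth_neg_of_le_one hu h1 hlt).le
      · exact hg ▸ hmono.monotoneOn (mem_Ici.2 h1.le) (mem_Ici.2 hub) hle
    · exact Or.inl ⟨hge, by nlinarith [mul_nonneg hp hu.le, mul_le_mul_of_nonneg_left hle hp]⟩

lemma exists_logGrowth_eq_zero (hp : 0 < p) (hp2 : p < 2) :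
    ∃ ub ∈ Ioo 1 (2 / p), logGrowth p ub = 0 := by
  have h2p : 1 < 2 / p := (one_lt_div hp).2 hp2
  have hcont : ContinuousOn (logGrowth p) (Icc 1 (2 / p)) := fun u hu =>
    (hasDerivAt_logGrowth (zero_lt_one.trans_le hu.1).ne').continuousAt.continuousWithinAt
  have hleft : logGrowth p 1 < 0 := by
    rw [logGrowth, log_one]; nlinarith
  have hright : 0 < logGrowth p (2 / p) := by
    have hlog : log (p / 2) < p / 2 - 1 :=
      log_lt_sub_one_of_pos (by positivity) (by linarith : p / 2 < 1).ne
    have hval : logGrowth p (2 / p) = -log (p / 2) + p / 2 - 1 := by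
      rw [logGrowth, ← log_inv, inv_div]; field_simp; ring
    linarith
  exact intermediate_value_Ioo h2p.le hcont ⟨hleft, hright⟩

theorem exists_stability_threshold (p : ℝ) (hp : 0 < p) (hp2 : p < 2) :
    ∃ ub : ℝ, 1 ≤ ub ∧ ub < 2 / p ∧
      (∀ u : ℝ, 0 < u → (SpredVN p u ↔ u ≤ ub)) ∧
      ub * exp ((1 - p * ub) ^ 2 / ub - 1) = 1 ∧
      ∀ u : ℝ, 0 < u → (1 - p * u) ^ 2 < u →
        u * exp ((1 - p * u) ^ 2 / u - 1) = 1 → u = ub := by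
  obtain ⟨ub, ⟨h1, h2⟩, hg⟩ := exists_logGrowth_eq_zero hp hp2
  have hpub : p * ub ≤ 2 := ((lt_div_iff₀' hp).1 h2).le
  refine ⟨ub, h1.le, h2, fun u hu => spredVN_iff_le_of_logGrowth_eq_zero hp.le h1.le hpub hg hu,
    by rw [mul_exp_eq_exp_logGrowth (by linarith), hg, exp_zero], fun u hu hlt heq => ?_⟩
  rw [mul_exp_eq_exp_logGrowth hu, exp_eq_one_iff] at heq
  rcases le_or_gt u 1 with h | h
  · exact absurd heq (logGrowth_neg_of_le_one hu h hlt).ne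
  · exact (strictMonoOn_logGrowth p).injOn (mem_Ici.2 h.le) (mem_Ici.2 h1.le) (heq.trans hg.symm)

theorem exists_stability_threshold_of_nonneg (hp : 0 ≤ p) (hp2 : p < 2) :
    ∃ ub : ℝ, 1 ≤ ub ∧ p * ub < 2 ∧ ∀ u : ℝ, 0 < u → (SpredVN p u ↔ u ≤ ub) := by
  rcases hp.eq_or_lt with rfl | hp
  · exact ⟨1, le_rfl, by norm_num, fun u hu =>
      spredVN_iff_le_of_logGrowth_eq_zero le_rfl le_rfl (by norm_num) (by simp [logGrowth]) hu⟩
  · obtain ⟨ub, h1, h2, hS, -⟩ := exists_stability_threshold p hp hp2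
    exact ⟨ub, h1, (lt_div_iff₀' hp).1 h2, hS⟩

end Threshold

lemma affine_le_exp_iff {c u : ℝ} (hc : 0 ≤ c) (hu : 0 < u) :
    (∀ s, 0 ≤ s → c + u * s ≤ exp s) ↔
      (u ≤ c ∧ c ≤ 1) ∨ (c < u ∧ u * exp (c / u - 1) ≤ 1) := by
  have key : u * exp (c / u - 1) ≤ 1 ↔ u ≤ exp (1 - c / u) := by
    rw [← le_div_iff₀ (exp_pos _), one_div, ← exp_neg, neg_sub]
  constructor
  · intro H
    rcases le_or_gt u c with h | h
    · exact Or.inl ⟨h, by simpa using H 0 le_rfl⟩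
    · refine Or.inr ⟨h, key.2 ?_⟩
      have := H (1 - c / u) (by rw [sub_nonneg, div_le_one hu]; exact h.le)
      rwa [show c + u * (1 - c / u) = u by field_simp; ring] at this
  · rintro (⟨huc, hc1⟩ | ⟨-, h⟩) s hs
    · nlinarith [add_one_le_exp s]
    · -- `u ≤ exp t` puts `c + u * s` below the tangent line of `exp` at `t = 1 - c / u`
      set t := 1 - c / u
      have hct : 0 ≤ 1 + (s - t) := by have := div_nonneg hc hu.le; linarith
      have hut : u * t = u - c := by simp only [t]; field_simp
      calc c + u * s = u * (1 + (s - t)) := by linear_combination hut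
        _ ≤ exp t * (1 + (s - t)) := mul_le_mul_of_nonneg_right (key.1 h) hct
        _ ≤ exp t * exp (s - t) := by gcongr; linarith [add_one_le_exp (s - t)]
        _ = exp s := by rw [← exp_add]; ring_nf

lemma max_neg_zero_sq (x : ℝ) : max (-x) 0 ^ 2 = min x 0 ^ 2 := by
  rw [← neg_zero, max_neg_neg, neg_sq, neg_zero]

section Attainment

variable {ι : Type*} [Fintype ι]

lemma exists_sq_sum_mul_sqrt_eq (b : ι → ℝ) (hA : 0 < ∑ i, max (b i) 0 ^ 2) {s : ℝ}
    (hs : 0 ≤ s) :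
    ∃ x : ι → ℝ, (∀ i, 0 ≤ x i) ∧ ∑ i, x i = s ∧
      (∑ i, b i * √(x i)) ^ 2 = (∑ i, max (b i) 0 ^ 2) * s := by
  set A := ∑ i, max (b i) 0 ^ 2 with hAdef
  refine ⟨fun i => max (b i) 0 ^ 2 * s / A, fun i => by positivity, ?_, ?_⟩
  · rw [← sum_div, ← sum_mul, ← hAdef]; field_simp
  have hsqrt : ∀ i, √(max (b i) 0 ^ 2 * s / A) = max (b i) 0 * (√s / √A) := fun i => by
    rw [sqrt_div' _ hA.le, sqrt_mul' _ hs, sqrt_sq (le_max_right _ _), mul_div_assoc]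
  have hbm : ∀ i, b i * max (b i) 0 = max (b i) 0 ^ 2 := fun i => by
    rcases le_total (b i) 0 with h | h <;> simp [h, sq]
  calc (∑ i, b i * √(max (b i) 0 ^ 2 * s / A)) ^ 2
      = ((∑ i, b i * max (b i) 0) * (√s / √A)) ^ 2 := by simp_rw [hsqrt, sum_mul, mul_assoc]
    _ = A * s := by
      simp_rw [hbm]
      rw [← hAdef, mul_pow, div_pow, sq_sqrt hs, sq_sqrt hA.le]
      field_simp

end Attainment

section BInfty

variable {d : ℕ}

lemma bInfty_neg (b : Fin d → ℝ) : bInfty (-b) = bInfty b := by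
  have h : ∀ x : ℝ, min (-x) 0 ^ 2 = max x 0 ^ 2 := fun x => by
    rw [← max_neg_zero_sq, neg_neg]
  simp only [bInfty, Pi.neg_apply, max_neg_zero_sq, h]
  exact max_comm _ _

lemma sq_bInfty (b : Fin d → ℝ) :
    bInfty b ^ 2 = max (∑ ℓ, max (b ℓ) 0 ^ 2) (∑ ℓ, min (b ℓ) 0 ^ 2) := by
  rw [bInfty, ← Real.sqrt_monotone.map_max, sq_sqrt]
  exact le_max_of_le_left (sum_nonneg fun ℓ _ => sq_nonneg _)

lemma sq_bInfty_pos {b : Fin d → ℝ} (hb : b ≠ 0) : 0 < bInfty b ^ 2 := by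
  obtain ⟨ℓ, hℓ⟩ := Function.ne_iff.1 hb
  rw [sq_bInfty]
  rcases (show b ℓ ≠ 0 from hℓ).lt_or_gt with h | h
  · refine lt_max_of_lt_right (lt_of_lt_of_le ?_ (single_le_sum
      (fun j _ => sq_nonneg (min (b j) 0)) (mem_univ ℓ)))
    rw [min_eq_left h.le]; exact sq_pos_of_neg h
  · refine lt_max_of_lt_left (lt_of_lt_of_le ?_ (single_le_sum
      (fun j _ => sq_nonneg (max (b j) 0)) (mem_univ ℓ)))
    rw [max_eq_left h.le]; exact pow_pos h 2

lemma sum_mul_sqrt_le_bInfty_mul (b x : Fin d → ℝ) (hx : ∀ ℓ, 0 ≤ x ℓ) :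
    ∑ ℓ, b ℓ * √(x ℓ) ≤ bInfty b * √(∑ ℓ, x ℓ) :=
  calc ∑ ℓ, b ℓ * √(x ℓ) ≤ ∑ ℓ, max (b ℓ) 0 * √(x ℓ) :=
        sum_le_sum fun ℓ _ => mul_le_mul_of_nonneg_right (le_max_left _ _) (sqrt_nonneg _)
    _ ≤ √(∑ ℓ, max (b ℓ) 0 ^ 2) * √(∑ ℓ, √(x ℓ) ^ 2) := sum_mul_le_sqrt_mul_sqrt _ _ _
    _ = √(∑ ℓ, max (b ℓ) 0 ^ 2) * √(∑ ℓ, x ℓ) := by simp_rw [sq_sqrt (hx _)]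
    _ ≤ bInfty b * √(∑ ℓ, x ℓ) := mul_le_mul_of_nonneg_right (le_max_left _ _) (sqrt_nonneg _)

lemma sq_sum_mul_sqrt_le (b x : Fin d → ℝ) (hx : ∀ ℓ, 0 ≤ x ℓ) :
    (∑ ℓ, b ℓ * √(x ℓ)) ^ 2 ≤ bInfty b ^ 2 * ∑ ℓ, x ℓ := by
  have hup := sum_mul_sqrt_le_bInfty_mul b x hx
  have hlow := sum_mul_sqrt_le_bInfty_mul (-b) x hx
  simp only [bInfty_neg, Pi.neg_apply, neg_mul, sum_neg_distrib] at hlow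
  calc _ ≤ (bInfty b * √(∑ ℓ, x ℓ)) ^ 2 := sq_le_sq' (by linarith) hup
    _ = _ := by rw [mul_pow, sq_sqrt (sum_nonneg fun ℓ _ => hx ℓ)]

lemma exists_sq_sum_mul_sqrt_eq_bInfty {b : Fin d → ℝ} (hb : b ≠ 0) {s : ℝ} (hs : 0 ≤ s) :
    ∃ x : Fin d → ℝ, (∀ ℓ, 0 ≤ x ℓ) ∧ ∑ ℓ, x ℓ = s ∧
      (∑ ℓ, b ℓ * √(x ℓ)) ^ 2 = bInfty b ^ 2 * s := by
  have hB := sq_bInfty_pos hb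
  rw [sq_bInfty] at hB ⊢
  rcases max_choice (∑ ℓ, max (b ℓ) 0 ^ 2) (∑ ℓ, min (b ℓ) 0 ^ 2) with h | h <;> rw [h] at hB ⊢
  · exact exists_sq_sum_mul_sqrt_eq b hB hs
  · simp_rw [← max_neg_zero_sq] at hB ⊢
    obtain ⟨x, hx, hsum, heq⟩ := exists_sq_sum_mul_sqrt_eq (-b) hB hs
    refine ⟨x, hx, hsum, ?_⟩
    simpa only [Pi.neg_apply, neg_mul, sum_neg_distrib, neg_sq] using heq

end BInfty

section Scheme

variable {d : ℕ} {b : Fin d → ℝ} {h : ℝ}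

lemma forall_exp_neg_mul_le_one_iff (hb : b ≠ 0) (hh : 0 ≤ h) (c : ℝ) :
    (∀ x : Fin d → ℝ, (∀ ℓ, 0 ≤ x ℓ) →
        exp (-∑ ℓ, x ℓ) * (c + h * (∑ ℓ, b ℓ * √(x ℓ)) ^ 2) ≤ 1) ↔
      ∀ s, 0 ≤ s → c + bInfty b ^ 2 * h * s ≤ exp s := by
  have hexp : ∀ s y : ℝ, exp (-s) * y ≤ 1 ↔ y ≤ exp s := fun s y => by
    rw [exp_neg, inv_mul_le_iff₀ (exp_pos _), mul_one]
  simp_rw [hexp]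
  constructor
  · intro H s hs
    obtain ⟨x, hx, rfl, heq⟩ := exists_sq_sum_mul_sqrt_eq_bInfty hb hs
    have := H x hx
    rw [heq] at this
    linarith
  · intro H x hx
    have := mul_le_mul_of_nonneg_left (sq_sum_mul_sqrt_le b x hx) hh
    linarith [H (∑ ℓ, x ℓ) (sum_nonneg fun ℓ _ => hx ℓ)]

lemma vonNeumann_stable_iff_spredVN (a : ℝ) (hb : b ≠ 0) (hh : 0 < h) :
    (∀ x : Fin d → ℝ, (∀ ℓ, 0 ≤ x ℓ) →
        exp (-∑ ℓ, x ℓ) * ((1 + a * h) ^ 2 + h * (∑ ℓ, b ℓ * √(x ℓ)) ^ 2) ≤ 1) ↔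
      SpredVN (-a / bInfty b ^ 2) (bInfty b ^ 2 * h) := by
  have hB := sq_bInfty_pos hb
  have hc : 1 - -a / bInfty b ^ 2 * (bInfty b ^ 2 * h) = 1 + a * h := by
    rw [← mul_assoc, div_mul_cancel₀ _ hB.ne']; ring
  rw [SpredVN, hc, ← affine_le_exp_iff (sq_nonneg _) (by positivity),
    forall_exp_neg_mul_le_one_iff hb hh.le]

end Scheme

/-- For `0 < p < 2` the Von Neumann stability region of the pseudo-explicit scheme in
the variable `u` is exactly `(0, ū]` for some `ū ∈ [1, 2/p)`, and `ū` is the unique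
solution of `u e^{(1 - p u)²/u - 1} = 1` in the region where `u > (1 - p u)²`.
Consequently, for the linear driver `f(y,z) = a y + Σ b_ℓ z^ℓ` with `a ≤ 0`, `b ≠ 0` and
`−a/|b|_∞² < 2`, there exists `h̄ ∈ [1/|b|_∞², −2/a)` (with `−2/a := +∞` when `a = 0`)
such that the scheme is Von Neumann stable if and only if `h ≤ h̄`. -/
theorem von_neumann_pseudo_explicit_small_p :
    (∀ p : ℝ, 0 < p → p < 2 →
      ∃ ub : ℝ, 1 ≤ ub ∧ ub < 2 / p ∧
        (∀ u : ℝ, 0 < u → (SpredVN p u ↔ u ≤ ub)) ∧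
        ub * Real.exp ((1 - p * ub) ^ 2 / ub - 1) = 1 ∧
        ∀ u : ℝ, 0 < u → (1 - p * u) ^ 2 < u →
          u * Real.exp ((1 - p * u) ^ 2 / u - 1) = 1 → u = ub) ∧
    (∀ (d : ℕ) (a : ℝ) (b : Fin d → ℝ), 1 ≤ d → a ≤ 0 → b ≠ 0 →
      -a / bInfty b ^ 2 < 2 →
      ∃ hbar : ℝ, 1 / bInfty b ^ 2 ≤ hbar ∧ (a < 0 → hbar < -2 / a) ∧
        ∀ h : ℝ, 0 < h →
          ((∀ x : Fin d → ℝ, (∀ ℓ, 0 ≤ x ℓ) →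
              Real.exp (-∑ ℓ, x ℓ) *
                ((1 + a * h) ^ 2 + h * (∑ ℓ, b ℓ * Real.sqrt (x ℓ)) ^ 2) ≤ 1)
            ↔ h ≤ hbar)) := by
  refine ⟨exists_stability_threshold, fun d a b _ ha hb hp2 => ?_⟩
  have hB := sq_bInfty_pos hb
  obtain ⟨ub, hub1, hpub, hS⟩ :=
    exists_stability_threshold_of_nonneg (div_nonneg (neg_nonneg.2 ha) hB.le) hp2
  refine ⟨ub / bInfty b ^ 2, div_le_div_of_nonneg_right hub1 hB.le, fun ha' => ?_, fun h hh => ?_⟩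
  · rw [lt_div_iff_of_neg ha']
    have : -a / bInfty b ^ 2 * ub = -(ub / bInfty b ^ 2 * a) := by ring
    linarith
  · rw [vonNeumann_stable_iff_spredVN a hb hh, hS _ (by positivity), le_div_iff₀ hB, mul_comm]
end

section
/- For 0 < p < 2 let ū(p) ∈ [1, 2/p) denote the right endpoint of the Von Neumann stability region of the pseudo-explicit scheme in the variable u, i.e. the unique value with ū(p) · e^{(1 − p ū(p))²/ū(p) − 1} = 1 such that the stability predicate S(p,u) holds exactly for u ≤ ū(p). Then: (i) ū(p) → 1 as p → 0⁺; (ii) p · ū(p) / 2 → 1 as p → 2⁻. -/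
/-!
As `p → 0⁺`, the bound `1 ≤ ū(p)` is given, and any `u > 1` is eventually unstable: the square
`(1 - p u)²` tends to `1 < u`, and `u e^{1/u - 1} > 1` because `e^x > 1 + x` for `x ≠ 0`.
As `p → 2⁻`, the bound `p ū(p) < 2` is given, and for `c ∈ (1/4, 1)` and `2c < p < 2` the step
`u = 2c/p` is stable: `(1 - p u)² = (1 - 2c)² < c < u ≤ 1`, so `u e^{(1 - p u)²/u - 1} < 1`.
-/

open Filter

open Topology Set Real

lemma one_lt_mul_exp_one_div_sub_one {u : ℝ} (hu : 1 < u) : 1 < u * exp (1 / u - 1) := by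
  have hu0 : 0 < u := one_pos.trans hu
  have hne : 1 / u - 1 ≠ 0 := by
    rw [sub_ne_zero, ne_eq, div_eq_one_iff_eq hu0.ne']
    exact hu.ne
  have hlt : 1 / u < exp (1 / u - 1) := by linarith [add_one_lt_exp hne]
  calc 1 = u * (1 / u) := by field_simp
    _ < u * exp (1 / u - 1) := mul_lt_mul_of_pos_left hlt hu0

section SpredVN

variable {p u : ℝ}

lemma spredVN_iff_of_sq_lt (h : (1 - p * u) ^ 2 < u) :
    SpredVN p u ↔ u * exp ((1 - p * u) ^ 2 / u - 1) ≤ 1 := by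
  constructor
  · rintro (⟨hle, -⟩ | ⟨-, hexp⟩)
    · exact absurd h hle.not_gt
    · exact hexp
  · exact fun hexp => Or.inr ⟨h, hexp⟩

lemma spredVN_of_sq_lt_of_le_one (h : (1 - p * u) ^ 2 < u) (hu1 : u ≤ 1) : SpredVN p u := by
  have hu0 : 0 < u := (sq_nonneg _).trans_lt h
  have hexp : exp ((1 - p * u) ^ 2 / u - 1) ≤ 1 := by
    rw [exp_le_one_iff, sub_nonpos, div_le_one hu0]
    exact h.le
  exact (spredVN_iff_of_sq_lt h).2 (mul_le_one₀ hu1 (exp_pos _).le hexp)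

lemma eventually_not_spredVN_nhds_zero (hu : 1 < u) : ∀ᶠ q in 𝓝 (0 : ℝ), ¬ SpredVN q u := by
  have hsq : Tendsto (fun q : ℝ => (1 - q * u) ^ 2) (𝓝 0) (𝓝 1) := by
    have : Continuous fun q : ℝ => (1 - q * u) ^ 2 := by fun_prop
    simpa using this.tendsto 0
  have hcont : Continuous fun s : ℝ => u * exp (s / u - 1) := by fun_prop
  have hopen : IsOpen {s : ℝ | s < u ∧ 1 < u * exp (s / u - 1)} :=
    (isOpen_lt continuous_id continuous_const).inter (isOpen_lt continuous_const hcont)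
  have hone : (1 : ℝ) ∈ {s : ℝ | s < u ∧ 1 < u * exp (s / u - 1)} :=
    ⟨hu, one_lt_mul_exp_one_div_sub_one hu⟩
  filter_upwards [hsq (hopen.mem_nhds hone)] with q ⟨hlt, hexp⟩ hS
  exact ((spredVN_iff_of_sq_lt hlt).1 hS).not_gt hexp

lemma spredVN_two_mul_div {c : ℝ} (hc : 1 / 4 < c) (hcp : 2 * c < p) (hp : p < 2) :
    SpredVN p (2 * c / p) := by
  have hp0 : 0 < p := by linarith
  have hc_lt : c < 2 * c / p := by rw [lt_div_iff₀ hp0]; nlinarith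
  apply spredVN_of_sq_lt_of_le_one
  · rw [mul_div_cancel₀ _ hp0.ne']
    nlinarith
  · exact (div_le_one hp0).2 hcp.le

end SpredVN

lemma tendsto_nhdsGT_zero_of_spredVN {ub : ℝ → ℝ}
    (hub : ∀ᶠ p in 𝓝[>] (0 : ℝ), 1 ≤ ub p ∧ ∀ u, 0 < u → u ≤ ub p → SpredVN p u) :
    Tendsto ub (𝓝[>] 0) (𝓝 1) := by
  rw [tendsto_order]
  refine ⟨fun a ha => hub.mono fun p hp => ha.trans_le hp.1, fun a ha => ?_⟩
  obtain ⟨u, hu1, hua⟩ := exists_between ha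
  filter_upwards [hub, nhdsWithin_le_nhds (eventually_not_spredVN_nhds_zero hu1)] with p hp hnS
  exact (not_le.1 fun hle => hnS (hp.2 u (by linarith) hle)).trans hua

lemma tendsto_nhdsLT_two_of_spredVN {ub : ℝ → ℝ}
    (hub : ∀ᶠ p in 𝓝[<] (2 : ℝ), p * ub p < 2 ∧ ∀ u, 0 < u → SpredVN p u → u ≤ ub p) :
    Tendsto (fun p => p * ub p / 2) (𝓝[<] 2) (𝓝 1) := by
  rw [tendsto_order]
  refine ⟨fun a ha => ?_, fun a ha => hub.mono fun p hp => by linarith [hp.1]⟩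
  obtain ⟨c, hac, hc1⟩ := exists_between (max_lt ha (by norm_num : (1 / 4 : ℝ) < 1))
  have hc : 1 / 4 < c := (le_max_right _ _).trans_lt hac
  filter_upwards [hub, Ioo_mem_nhdsLT (by linarith : 2 * c < 2)] with p hp hpc
  have hp0 : 0 < p := by linarith [hpc.1]
  have hle := hp.2 _ (by positivity) (spredVN_two_mul_div hc hpc.1 hpc.2)
  rw [div_le_iff₀ hp0] at hle
  linarith [le_max_left a (1 / 4)]

/-- Limits of the right endpoint `ū(p)` of the Von Neumann stability region of the
pseudo-explicit scheme: given `ub : ℝ → ℝ` such that for all `0 < p < 2`, `ub p` lies in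
`[1, 2/p)`, satisfies `ub p · e^{(1 - p·ub p)²/ub p − 1} = 1`, and the stability
predicate holds exactly for `u ≤ ub p`, one has `ub p → 1` as `p → 0⁺` and
`p · ub p / 2 → 1` as `p → 2⁻`. -/
theorem von_neumann_pseudo_explicit_endpoint_limits (ub : ℝ → ℝ)
    (hub : ∀ p : ℝ, 0 < p → p < 2 →
      1 ≤ ub p ∧ ub p < 2 / p ∧
        ub p * Real.exp ((1 - p * ub p) ^ 2 / ub p - 1) = 1 ∧
        ∀ u : ℝ, 0 < u → (SpredVN p u ↔ u ≤ ub p)) :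
    Tendsto ub (nhdsWithin 0 (Set.Ioi 0)) (nhds 1) ∧
    Tendsto (fun p => p * ub p / 2) (nhdsWithin 2 (Set.Iio 2)) (nhds 1) := by
  refine ⟨tendsto_nhdsGT_zero_of_spredVN ?_, tendsto_nhdsLT_two_of_spredVN ?_⟩
  · filter_upwards [Ioo_mem_nhdsGT (by norm_num : (0 : ℝ) < 2)] with p hp
    obtain ⟨hone, -, -, hiff⟩ := hub p hp.1 hp.2
    exact ⟨hone, fun u hu => (hiff u hu).2⟩
  · filter_upwards [Ioo_mem_nhdsLT (by norm_num : (0 : ℝ) < 2)] with p hp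
    obtain ⟨-, hlt, -, hiff⟩ := hub p hp.1 hp.2
    exact ⟨(lt_div_iff₀' hp.1).1 hlt, fun u hu => (hiff u hu).1⟩
end
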